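/- Capacity for error-free binary-symmetric links: there exists a unique P* ∈ (0,1) such that H(P*) = 1 − P*; moreover P* < 1/4, and sup over P ∈ [0,1] of min{ 1 − P, H(P) } = 1 − P*, which in particular is strictly greater than 3/4 (and hence strictly greater than the conventional relaying rate 1/2). -/

import Mathlib

/-!
The map `p ↦ binH p + p` is strictly increasing on `[0, 1/2]`, equals `0` at `0` and exceeds `1`
at `1/4`, so `binH P = 1 - P` has exactly one solution there, and it lies in `(0, 1/4)`.
On `(1/2, 1)` concavity gives `binH p > 2 (1 - p) > 1 - p`, so there are no others.
At the crossing `P`, `1 - p` decreases to the right and `binH p` increases to the left, so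
`min (1 - p) (binH p)` is maximal at `P`.
-/

/-- The binary entropy function (in bits), with the convention `0·log2 0 = 0`. -/
noncomputable def binH (p : ℝ) : ℝ :=
  -(p * Real.logb 2 p) - (1 - p) * Real.logb 2 (1 - p)

open Real Set

lemma binH_eq_binEntropy_div_log_two (p : ℝ) : binH p = binEntropy p / log 2 := by
  simp only [binH, binEntropy, logb, log_inv]
  ring

lemma continuous_binH : Continuous binH := by
  simp only [funext binH_eq_binEntropy_div_log_two]
  fun_prop

lemma binH_zero : binH 0 = 0 := by
  simp [binH]

lemma binH_one_sub (p : ℝ) : binH (1 - p) = binH p := by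
  simp only [binH_eq_binEntropy_div_log_two, binEntropy_one_sub]

lemma binH_strictMonoOn : StrictMonoOn binH (Icc 0 2⁻¹) := fun _ hx _ hy hxy => by
  simp only [binH_eq_binEntropy_div_log_two]
  exact div_lt_div_of_pos_right (binEntropy_strictMonoOn hx hy hxy) (log_pos one_lt_two)

-- The chord of the concave `binEntropy` from `(0, 0)` to `(1/2, log 2)`.
lemma two_mul_lt_binH {p : ℝ} (hp₀ : 0 < p) (hp₁ : p < 2⁻¹) : 2 * p < binH p := by
  have hchord := strictConcave_binEntropy.2 (⟨le_rfl, zero_le_one⟩ : (0 : ℝ) ∈ Icc 0 1)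
    (⟨by norm_num, by norm_num⟩ : (2⁻¹ : ℝ) ∈ Icc 0 1) (by norm_num)
    (show 0 < 1 - 2 * p by linarith) (show 0 < 2 * p by linarith) (by ring)
  simp only [smul_eq_mul, binEntropy_zero, binEntropy_two_inv, mul_zero, zero_add,
    show 2 * p * 2⁻¹ = p by ring] at hchord
  rw [binH_eq_binEntropy_div_log_two, lt_div_iff₀ (log_pos one_lt_two)]
  linarith

lemma one_sub_lt_binH {p : ℝ} (hp₀ : 2⁻¹ < p) (hp₁ : p < 1) : 1 - p < binH p := by
  rw [← binH_one_sub]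
  linarith [two_mul_lt_binH (p := 1 - p) (by linarith) (by linarith)]

-- `binH (1/4) = 2 - (3/4) log₂ 3`, and `log₂ 3 < 5/3` because `3³ < 2⁵`.
lemma three_quarters_lt_binH_quarter : 3 / 4 < binH (1 / 4) := by
  have h27 : log (3 ^ 3) < log (2 ^ 5) := log_lt_log (by norm_num) (by norm_num)
  have hquarter : log (1 / 4) = -2 * log 2 := by
    rw [one_div, log_inv, show (4 : ℝ) = 2 ^ 2 by norm_num, log_pow]
    push_cast
    ring
  have hthree_quarters : log (1 - 1 / 4) = log 3 - 2 * log 2 := by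
    rw [show (1 - 1 / 4 : ℝ) = 3 / 2 ^ 2 by norm_num, log_div (by norm_num) (by norm_num), log_pow]
    push_cast
    ring
  rw [log_pow, log_pow] at h27
  rw [binH_eq_binEntropy_div_log_two, lt_div_iff₀ (log_pos one_lt_two), binEntropy, log_inv,
    log_inv, hquarter, hthree_quarters]
  push_cast at h27
  linarith

lemma isGreatest_min_of_crossing {α β : Type*} [LinearOrder α] [LinearOrder β] {s : Set α}
    {f g : α → β} {x : α} (hx : x ∈ s) (hfg : f x = g x)
    (hf : ∀ y ∈ s, x ≤ y → f y ≤ f x) (hg : ∀ y ∈ s, y ≤ x → g y ≤ g x) :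
    IsGreatest {r | ∃ y ∈ s, r = min (f y) (g y)} (f x) := by
  refine ⟨⟨x, hx, by rw [hfg, min_self]⟩, ?_⟩
  rintro _ ⟨y, hy, rfl⟩
  rcases le_total x y with hxy | hyx
  · exact (min_le_left _ _).trans (hf y hy hxy)
  · exact (min_le_right _ _).trans (hg y hy hyx |>.trans hfg.ge)

lemma exists_binH_eq_one_sub : ∃ P ∈ Ioo 0 (1 / 4 : ℝ), binH P = 1 - P := by
  have hcont : ContinuousOn (fun p => binH p + p) (Icc 0 (1 / 4)) :=
    (continuous_binH.add continuous_id).continuousOn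
  obtain ⟨P, hP, hfix⟩ := intermediate_value_Ioo (by norm_num) hcont
    (show (1 : ℝ) ∈ Ioo (binH 0 + 0) (binH (1 / 4) + 1 / 4) by
      constructor <;> linarith [binH_zero, three_quarters_lt_binH_quarter])
  exact ⟨P, hP, by linarith [hfix]⟩

lemma subsingleton_binH_eq_one_sub : {p ∈ Ioo (0 : ℝ) 1 | binH p = 1 - p}.Subsingleton := by
  have hhalf : ∀ p ∈ {p ∈ Ioo (0 : ℝ) 1 | binH p = 1 - p}, p ∈ Icc 0 2⁻¹ :=
    fun p ⟨⟨hp₀, hp₁⟩, hfix⟩ => ⟨hp₀.le, not_lt.1 fun h => (one_sub_lt_binH h hp₁).ne' hfix⟩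
  intro p hp q hq
  refine (binH_strictMonoOn.add (strictMono_id.strictMonoOn _)).injOn (hhalf p hp) (hhalf q hq) ?_
  simp only [id, hp.2, hq.2, sub_add_cancel]

/-- capacity for error-free binary-symmetric links: there exists a unique
`P* ∈ (0,1)` with `H(P*) = 1 − P*`; moreover `P* < 1/4`, and
`sup_{P ∈ [0,1]} min{ 1 − P, H(P) } = 1 − P* > 3/4` (hence the capacity strictly
exceeds the conventional relaying rate `1/2`). -/
theorem capacity_error_free_BSC :
    ∃ Pstar ∈ Set.Ioo (0:ℝ) 1,
      binH Pstar = 1 - Pstar ∧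
      (∀ Q ∈ Set.Ioo (0:ℝ) 1, binH Q = 1 - Q → Q = Pstar) ∧
      Pstar < 1/4 ∧
      sSup {r : ℝ | ∃ P ∈ Set.Icc (0:ℝ) 1, r = min (1 - P) (binH P)} = 1 - Pstar ∧
      3/4 < 1 - Pstar := by
  obtain ⟨P, ⟨hP₀, hP₄⟩, hfix⟩ := exists_binH_eq_one_sub
  have hP : P ∈ Ioo (0 : ℝ) 1 := ⟨hP₀, by linarith⟩
  have hPhalf : P ∈ Icc (0 : ℝ) 2⁻¹ := ⟨hP₀.le, by linarith⟩
  have hsup : IsGreatest {r | ∃ y ∈ Icc (0 : ℝ) 1, r = min (1 - y) (binH y)} (1 - P) :=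
    isGreatest_min_of_crossing ⟨hP₀.le, hP.2.le⟩ hfix.symm (fun _ _ h => by linarith)
      fun y hy hyP => binH_strictMonoOn.monotoneOn ⟨hy.1, hyP.trans hPhalf.2⟩ hPhalf hyP
  exact ⟨P, hP, hfix, fun Q hQ hQfix => subsingleton_binH_eq_one_sub ⟨hQ, hQfix⟩ ⟨hP, hfix⟩,
    hP₄, hsup.csSup_eq, by linarith⟩
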